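/- Define d(n) = 8n(n+1)(H_n² - H_n^{(2)}) - 2n(15n+7)H_n + 45n² - n, S(n) = 2n(H_n - 1), and s2(n) = 4n(H_n² - H_n^{(2)}) - 6n(H_n - 1). Then for every n ≥ 2, d(n) = (2/(n-1))·∑_{k=1}^{n-1} [d(k) + S(k)·S(n-k) + (n-k)·s2(k) + 4(n-k)·S(k)] + (2/3)n(n+1). -/

import Mathlib

open Finset

noncomputable def H (n : ℕ) : ℝ := ∑ i ∈ Finset.range n, (1 : ℝ) / (i + 1)

noncomputable def H2 (n : ℕ) : ℝ := ∑ i ∈ Finset.range n, (1 : ℝ) / ((i + 1) ^ 2)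

noncomputable def d (n : ℕ) : ℝ :=
  8 * n * (n + 1) * (H n ^ 2 - H2 n) - 2 * n * (15 * n + 7) * H n + 45 * n ^ 2 - n

noncomputable def S (n : ℕ) : ℝ := 2 * n * (H n - 1)

noncomputable def s2 (n : ℕ) : ℝ := 4 * n * (H n ^ 2 - H2 n) - 6 * n * (H n - 1)

/-
Write `F n` for the sum on the right-hand side (`recurrenceSum n`). Going from `n` to `n + 1`
raises every weight `n - k` by one and, as `S (m + 1) = S m + 2 H m`, adds `2 S k H (n - k)` to
each product, so `F (n + 1) - F n = d n + ∑ (s2 k + 4 S k) + 2 ∑ S k H (n - k)`. Both new sums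
have closed forms. The only non-elementary one is the convolution `∑ H k H (n - k)` (the weight
`k` in `S k` is traded for `n / 2` by the symmetry `k ↦ n - k`); its increments are
`∑ H k / (n + 1 - k) = H (n + 1)² - H2 (n + 1)`, which after reflecting `k ↦ n - k` follows by
induction from `1 / (k (n + 1 - k)) = (1 / k + 1 / (n + 1 - k)) / (n + 1)`. Induction on `n`
then gives `F n = (n - 1) / 2 * (d n - 2 n (n + 1) / 3)`.
-/

@[simp] lemma H_zero : H 0 = 0 := by simp [H]

@[simp] lemma H2_zero : H2 0 = 0 := by simp [H2]

lemma H_succ (n : ℕ) : H (n + 1) = H n + 1 / ((n : ℝ) + 1) := by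
  simp [H, sum_range_succ]

lemma H2_succ (n : ℕ) : H2 (n + 1) = H2 n + 1 / ((n : ℝ) + 1) ^ 2 := by
  simp [H2, sum_range_succ]

lemma sum_Icc_one_inv (n : ℕ) : ∑ k ∈ Icc 1 n, (1 : ℝ) / k = H n := by
  induction n with
  | zero => simp
  | succ n ih => rw [sum_Icc_succ_top (by omega), ih, H_succ]; push_cast; ring

lemma S_succ (n : ℕ) : S (n + 1) = S n + 2 * H n := by
  simp only [S, H_succ]
  push_cast
  field_simp
  ring

lemma sum_Icc_reflect {M : Type*} [AddCommMonoid M] (f : ℕ → ℕ → M) (n : ℕ) :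
    ∑ k ∈ Icc 1 (n - 1), f k (n - k) = ∑ k ∈ Icc 1 (n - 1), f (n - k) k := by
  have hIco : Icc 1 (n - 1) = Ico 1 n := by ext; simp; omega
  have := sum_Ico_reflect (fun k ↦ f k (n - k)) 1 (Nat.le_succ n)
  rw [Nat.add_sub_cancel, Nat.add_sub_cancel_left] at this
  rw [hIco, ← this]
  refine sum_congr rfl fun k hk ↦ ?_
  rw [Nat.sub_sub_self (mem_Ico.1 hk).2.le]

lemma sum_Icc_inv_mul_inv (n : ℕ) :
    ∑ k ∈ Icc 1 n, (1 : ℝ) / (k * (n + 1 - k : ℕ)) = 2 * H n / (n + 1) := by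
  have hreflect := sum_Icc_reflect (fun i j ↦ (1 : ℝ) / j) (n + 1)
  simp only [Nat.add_sub_cancel] at hreflect
  have hpartial : ∀ k ∈ Icc 1 n, (1 : ℝ) / (k * (n + 1 - k : ℕ))
      = (1 / (n + 1)) * (1 / k + 1 / (n + 1 - k : ℕ)) := by
    intro k hk
    have hk := mem_Icc.1 hk
    rw [Nat.cast_sub (by omega)]
    have : (k : ℝ) ≠ 0 := Nat.cast_ne_zero.2 (by omega)
    have : (n : ℝ) + 1 - k ≠ 0 := by
      have : (k : ℝ) ≤ n := by exact_mod_cast hk.2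
      linarith
    push_cast
    field_simp
    ring
  rw [sum_congr rfl hpartial, ← mul_sum, sum_add_distrib, hreflect, sum_Icc_one_inv]
  ring

lemma sum_Icc_one_eq_add {M : Type*} [AddCommMonoid M] {f : ℕ → M} (hf : f 0 = 0) (n : ℕ) :
    ∑ k ∈ Icc 1 n, f k = ∑ k ∈ Icc 1 (n - 1), f k + f n := by
  rcases n with _ | n
  · simp [hf]
  · rw [Nat.add_sub_cancel, sum_Icc_succ_top (by omega)]

lemma H_sq_sub_H2_succ (n : ℕ) :
    H (n + 1) ^ 2 - H2 (n + 1) = H n ^ 2 - H2 n + 2 * H n / (n + 1) := by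
  rw [H_succ, H2_succ]
  field_simp
  ring

lemma sum_Icc_H_div (n : ℕ) : ∑ k ∈ Icc 1 (n - 1), H k / (n - k : ℕ) = H n ^ 2 - H2 n := by
  rw [sum_Icc_reflect (fun i j ↦ H i / j)]
  -- after reflecting, the increments are `∑ 1 / (k * (n + 1 - k))`; the `k = 0` term `H n / 0` is `0`
  induction n with
  | zero => simp
  | succ n ih =>
    have hterm : ∀ k ∈ Icc 1 n, H (n + 1 - k) / k = H (n - k) / k + 1 / (k * (n + 1 - k : ℕ)) := by
      intro k hk
      rw [show n + 1 - k = n - k + 1 by grind, H_succ, Nat.cast_succ, add_div, div_div,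
        mul_comm]
    rw [Nat.add_sub_cancel, sum_congr rfl hterm, sum_add_distrib, sum_Icc_inv_mul_inv,
      sum_Icc_one_eq_add (by simp), ih, H_sq_sub_H2_succ]
    simp

lemma sum_Icc_H_mul_H (n : ℕ) :
    ∑ k ∈ Icc 1 (n - 1), H k * H (n - k) = (n + 1) * (H n ^ 2 - H2 n) - 2 * n * H n + 2 * n := by
  induction n with
  | zero => simp
  | succ n ih =>
    have hterm : ∀ k ∈ Icc 1 n, H k * H (n + 1 - k) = H k * H (n - k) + H k / (n + 1 - k : ℕ) := by
      intro k hk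
      rw [show n + 1 - k = n - k + 1 by grind, H_succ, Nat.cast_succ]
      ring
    have hconv := sum_Icc_H_div (n + 1)
    rw [Nat.add_sub_cancel] at hconv ⊢
    rw [sum_congr rfl hterm, sum_add_distrib, hconv, sum_Icc_one_eq_add (by simp), ih,
      Nat.sub_self, H_zero, mul_zero, add_zero, H_sq_sub_H2_succ, H_succ]
    field_simp
    push_cast
    ring

lemma sum_Icc_mul_conv_self (f : ℕ → ℝ) (n : ℕ) :
    ∑ k ∈ Icc 1 (n - 1), k * (f k * f (n - k)) = n / 2 * ∑ k ∈ Icc 1 (n - 1), f k * f (n - k) := by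
  have hreflect := sum_Icc_reflect (fun i j ↦ (i : ℝ) * (f i * f j)) n
  have hpair : ∀ k ∈ Icc 1 (n - 1), k * (f k * f (n - k)) + (n - k : ℕ) * (f (n - k) * f k)
      = n * (f k * f (n - k)) := by
    intro k hk
    rw [Nat.cast_sub (by grind)]
    ring
  have htwice : 2 * ∑ k ∈ Icc 1 (n - 1), k * (f k * f (n - k))
      = n * ∑ k ∈ Icc 1 (n - 1), f k * f (n - k) := by
    rw [two_mul]
    nth_rewrite 2 [hreflect]
    rw [← sum_add_distrib, sum_congr rfl hpair, mul_sum]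
  linarith

lemma sum_Icc_H (n : ℕ) : ∑ k ∈ Icc 1 (n - 1), H k = n * H n - n := by
  induction n with
  | zero => simp
  | succ n ih =>
    rw [Nat.add_sub_cancel, sum_Icc_one_eq_add (by simp), ih, H_succ]
    field_simp
    push_cast
    ring

lemma sum_Icc_mul_H (n : ℕ) : ∑ k ∈ Icc 1 (n - 1), k * H k = n * (n - 1) / 4 * (2 * H n - 1) := by
  induction n with
  | zero => simp
  | succ n ih =>
    rw [Nat.add_sub_cancel, sum_Icc_one_eq_add (by simp), ih, H_succ]
    field_simp
    push_cast
    ring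

lemma sum_Icc_mul_H_sub (n : ℕ) :
    ∑ k ∈ Icc 1 (n - 1), k * H (n - k) = n * (n + 1) / 2 * H n - n * (3 * n + 1) / 4 := by
  have hterm : ∀ k ∈ Icc 1 (n - 1), ((n - k : ℕ) : ℝ) * H k = n * H k - k * H k := by
    intro k hk
    rw [Nat.cast_sub (by grind)]
    ring
  rw [sum_Icc_reflect (fun i j ↦ (i : ℝ) * H j), sum_congr rfl hterm, sum_sub_distrib, ← mul_sum,
    sum_Icc_H, sum_Icc_mul_H]
  ring

lemma sum_Icc_S_mul_H_sub (n : ℕ) :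
    ∑ k ∈ Icc 1 (n - 1), S k * H (n - k)
      = n * (n + 1) * (H n ^ 2 - H2 n) - n * (3 * n + 1) * H n + n * (7 * n + 1) / 2 := by
  have hterm : ∀ k ∈ Icc 1 (n - 1),
      S k * H (n - k) = 2 * (k * (H k * H (n - k))) - 2 * (k * H (n - k)) := by
    intro k _
    rw [S]
    ring
  rw [sum_congr rfl hterm, sum_sub_distrib, ← mul_sum, ← mul_sum, sum_Icc_mul_conv_self,
    sum_Icc_H_mul_H, sum_Icc_mul_H_sub]
  ring

lemma sum_Icc_s2_add_four_mul_S (n : ℕ) :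
    ∑ k ∈ Icc 1 n, (s2 k + 4 * S k)
      = 2 * n * (n + 1) * (H n ^ 2 - H2 n) - n * (n - 3) * H n - n * (n + 3) / 2 := by
  induction n with
  | zero => simp
  | succ n ih =>
    rw [sum_Icc_succ_top (by omega), ih, s2, S, H_sq_sub_H2_succ, H_succ]
    field_simp
    push_cast
    ring

noncomputable def recurrenceSum (n : ℕ) : ℝ :=
  ∑ k ∈ Icc 1 (n - 1), (d k + S k * S (n - k) + ((n : ℝ) - k) * s2 k + 4 * ((n : ℝ) - k) * S k)

lemma recurrenceSum_succ (n : ℕ) :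
    recurrenceSum (n + 1) = recurrenceSum n + d n + ∑ k ∈ Icc 1 n, (s2 k + 4 * S k)
      + 2 * ∑ k ∈ Icc 1 (n - 1), S k * H (n - k) := by
  have hterm : ∀ k ∈ Icc 1 n,
      d k + S k * S (n + 1 - k) + ((n + 1 : ℕ) - k : ℝ) * s2 k + 4 * ((n + 1 : ℕ) - k : ℝ) * S k
        = (d k + S k * S (n - k) + ((n : ℝ) - k) * s2 k + 4 * ((n : ℝ) - k) * S k)
          + (s2 k + 4 * S k) + 2 * (S k * H (n - k)) := by
    intro k hk
    rw [show n + 1 - k = n - k + 1 by grind, S_succ]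
    push_cast
    ring
  rw [recurrenceSum, Nat.add_sub_cancel, sum_congr rfl hterm, sum_add_distrib, sum_add_distrib,
    ← mul_sum, sum_Icc_one_eq_add (by simp [d, S, s2]),
    sum_Icc_one_eq_add (f := fun k ↦ S k * H (n - k)) (by simp [S]), recurrenceSum]
  simp [S]

lemma recurrenceSum_eq (n : ℕ) : recurrenceSum n = (n - 1) / 2 * (d n - 2 / 3 * n * (n + 1)) := by
  induction n with
  | zero => simp [recurrenceSum, d]
  | succ n ih =>
    rw [recurrenceSum_succ, ih, sum_Icc_s2_add_four_mul_S, sum_Icc_S_mul_H_sub, d, d, H_succ,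
      H2_succ]
    field_simp
    push_cast
    ring

theorem d_recurrence (n : ℕ) (hn : 2 ≤ n) :
    d n = (2 / ((n : ℝ) - 1)) * ∑ k ∈ Finset.Icc 1 (n - 1),
        (d k + S k * S (n - k) + ((n : ℝ) - k) * s2 k + 4 * ((n : ℝ) - k) * S k)
      + (2 / 3) * n * (n + 1) := by
  have hn' : (n : ℝ) - 1 ≠ 0 := by
    have : (2 : ℝ) ≤ n := by exact_mod_cast hn
    linarith
  rw [← recurrenceSum, recurrenceSum_eq]
  field_simp
  ring
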